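/- arXiv:2505.01151 — 3 statements merged into one kernel-verified Lean document; each statement's English description precedes it below -/
import Mathlib

section
/- Let (X,d) be a metric space, μ a Borel measure, n > 0, C ≥ 1, and E ⊂ X a Borel set such that for every x ∈ E there exists r_x > 0 with μ(B(x,r)) ≥ C⁻¹ rⁿ for all r ∈ (0, r_x]. Then for every open set O ⊇ E one has H^n(E) ≤ 10ⁿ C μ(O); consequently H^n(E) ≤ 10ⁿ C μ(E) whenever μ is outer regular on E. -/
/-!
For each scale `ε`, pick at every `x ∈ E` a radius `ρ x ≪ ε` with `B̄(x, ρ x) ⊆ O` on which the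
lower bound `μ(B(x, ρ)) ≥ C⁻¹ ρⁿ` holds. The Vitali lemma extracts disjoint balls `B(xᵢ, ρᵢ)`
whose `5`-fold enlargements cover `E`; each enlargement has diameter at most `10 ρᵢ`, so
`diamⁿ ≤ 10ⁿ ρᵢⁿ ≤ 10ⁿ C μ(B(xᵢ, ρᵢ))`, and disjointness bounds the sum by `10ⁿ C μ(O)`. Letting
`ε → 0` bounds `μH[n] E`; the second claim follows by taking the infimum over `O`.
-/

open Set Metric MeasureTheory Filter Function Topology ENNReal

universe u

theorem MeasureTheory.Measure.hausdorffMeasure_le_of_forall_countable_cover {X : Type u}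
    [EMetricSpace X] [MeasurableSpace X] [BorelSpace X] (d : ℝ) (s : Set X) (M : ℝ≥0∞)
    (h : ∀ ε : ℝ, 0 < ε → ∃ (ι : Type u) (_ : Countable ι) (t : ι → Set X),
      s ⊆ ⋃ i, t i ∧ (∀ i, ediam (t i) ≤ ENNReal.ofReal ε) ∧ ∑' i, ediam (t i) ^ d ≤ M) :
    μH[d] s ≤ M := by
  choose ι _ t hcover hdiam hsum using fun k : ℕ => h (1 / (k + 1)) Nat.one_div_pos_of_nat
  have hr : Tendsto (fun k : ℕ => ENNReal.ofReal (1 / (k + 1))) atTop (𝓝 0) := by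
    simpa using ENNReal.tendsto_ofReal tendsto_one_div_add_atTop_nhds_zero_nat
  calc μH[d] s ≤ liminf (fun k => ∑' i, ediam (t k i) ^ d) atTop :=
        Measure.hausdorffMeasure_le_liminf_tsum d s _ hr t (.of_forall hdiam) (.of_forall hcover)
    _ ≤ M := liminf_le_of_frequently_le' (.of_forall hsum)

theorem Metric.exists_radius_closedBall_subset_of_forall_Ioc {X : Type*} [PseudoMetricSpace X]
    {x : X} {O : Set X} (hO : O ∈ 𝓝 x) {P : ℝ → Prop} (hP : ∃ R > 0, ∀ r ∈ Ioc 0 R, P r)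
    {ε : ℝ} (hε : 0 < ε) : ∃ r ∈ Ioc 0 ε, closedBall x r ⊆ O ∧ P r := by
  obtain ⟨R, hR, hPR⟩ := hP
  have hsmall : ∀ᶠ r in 𝓝[>] (0 : ℝ), r ≤ min R ε ∧ closedBall x r ⊆ O :=
    nhdsWithin_le_nhds ((eventually_le_nhds (lt_min hR hε)).and (eventually_closedBall_subset hO))
  obtain ⟨r, ⟨hrRε, hrO⟩, hr⟩ := (hsmall.and self_mem_nhdsWithin).exists
  exact ⟨r, ⟨hr, hrRε.trans (min_le_right _ _)⟩, hrO, hPR r ⟨hr, hrRε.trans (min_le_left _ _)⟩⟩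

theorem Metric.ediam_closedBall_le {X : Type*} [PseudoMetricSpace X] (x : X) (r : ℝ) :
    ediam (closedBall x r) ≤ ENNReal.ofReal (2 * r) :=
  ediam_le_of_forall_dist_le fun y hy z hz => by
    linarith [dist_triangle_right y z x, mem_closedBall.1 hy, mem_closedBall.1 hz]

theorem ediam_closedBall_rpow_le_of_lower_bound {X : Type*} [PseudoMetricSpace X]
    [MeasurableSpace X] (μ : Measure X) {n C τ ρ : ℝ} (hn : 0 ≤ n) (hC : 0 < C) (hτ : 0 ≤ τ)
    (hρ : 0 < ρ) {x : X} (hlow : ENNReal.ofReal (C⁻¹ * ρ ^ n) ≤ μ (ball x ρ)) :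
    ediam (closedBall x (τ * ρ)) ^ n ≤ ENNReal.ofReal ((2 * τ) ^ n * C) * μ (ball x ρ) :=
  calc ediam (closedBall x (τ * ρ)) ^ n
      ≤ ENNReal.ofReal (2 * (τ * ρ)) ^ n := by gcongr; exact ediam_closedBall_le x _
    _ = ENNReal.ofReal ((2 * τ) ^ n * C) * ENNReal.ofReal (C⁻¹ * ρ ^ n) := by
        rw [ENNReal.ofReal_rpow_of_nonneg (by positivity) hn, ← ENNReal.ofReal_mul (by positivity),
          ← mul_assoc, Real.mul_rpow (by positivity) hρ.le]
        field_simp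
    _ ≤ ENNReal.ofReal ((2 * τ) ^ n * C) * μ (ball x ρ) := by gcongr

theorem exists_countable_cover_tsum_ediam_rpow_le {X : Type u} [MetricSpace X]
    [MeasurableSpace X] [OpensMeasurableSpace X] (μ : Measure X) {n C : ℝ} (hn : 0 ≤ n)
    (hC : 0 < C) {E O : Set X}
    (hlow : ∀ x ∈ E, ∃ rx > (0:ℝ), ∀ r ∈ Ioc (0:ℝ) rx,
      ENNReal.ofReal (C⁻¹ * r ^ n) ≤ μ (ball x r))
    (hO : IsOpen O) (hEO : E ⊆ O) (hμO : μ O ≠ ∞) {τ ε : ℝ} (hτ : 3 < τ) (hε : 0 < ε) :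
    ∃ (ι : Type u) (_ : Countable ι) (t : ι → Set X), E ⊆ ⋃ i, t i ∧
      (∀ i, ediam (t i) ≤ ENNReal.ofReal ε) ∧
      ∑' i, ediam (t i) ^ n ≤ ENNReal.ofReal ((2 * τ) ^ n * C) * μ O := by
  have hτ₀ : 0 < τ := by linarith
  choose! ρ hρ hρO hρμ using fun x hx => exists_radius_closedBall_subset_of_forall_Ioc
    (hO.mem_nhds (hEO hx)) (hlow x hx) (div_pos hε (mul_pos two_pos hτ₀))
  obtain ⟨u, huE, hdisj, hcov⟩ := Vitali.exists_disjoint_subfamily_covering_enlargement_closedBall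
    E id ρ _ (fun x hx => (hρ x hx).2) τ hτ
  have hdisj' : Pairwise (Disjoint on fun i : u => ball (i : X) (ρ i)) := fun i j hij =>
    (hdisj i.2 j.2 (Subtype.coe_injective.ne hij)).mono ball_subset_closedBall
      ball_subset_closedBall
  have hUO : ⋃ i : u, ball (i : X) (ρ i) ⊆ O :=
    iUnion_subset fun i => ball_subset_closedBall.trans (hρO i (huE i.2))
  -- the disjoint balls have positive measure inside `O`, which has finite measure
  have hu : Countable u := by
    have hpos : ∀ i : u, 0 < μ (ball (i : X) (ρ i)) := fun i =>
      (ENNReal.ofReal_pos.2 (by have := (hρ i (huE i.2)).1; positivity)).trans_le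
        (hρμ i (huE i.2))
    simpa [hpos, countable_univ_iff] using
      Measure.countable_meas_pos_of_disjoint_of_meas_iUnion_ne_top μ
        (fun _ => measurableSet_ball) hdisj' (measure_mono hUO |>.trans_lt hμO.lt_top).ne
  refine ⟨u, hu, fun i => closedBall (i : X) (τ * ρ i), fun x hx => ?_, fun i => ?_, ?_⟩
  · obtain ⟨b, hb, hxb⟩ := hcov x hx
    exact mem_iUnion.2 ⟨⟨b, hb⟩, hxb (mem_closedBall_self (hρ x hx).1.le)⟩
  · refine (ediam_closedBall_le _ _).trans (ENNReal.ofReal_le_ofReal ?_)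
    have := (hρ i (huE i.2)).2
    rw [le_div_iff₀ (by positivity)] at this
    linarith
  · calc ∑' i : u, ediam (closedBall (i : X) (τ * ρ i)) ^ n
        ≤ ∑' i : u, ENNReal.ofReal ((2 * τ) ^ n * C) * μ (ball (i : X) (ρ i)) :=
          ENNReal.tsum_le_tsum fun i => ediam_closedBall_rpow_le_of_lower_bound μ hn hC hτ₀.le
            (hρ i (huE i.2)).1 (hρμ i (huE i.2))
      _ = ENNReal.ofReal ((2 * τ) ^ n * C) * μ (⋃ i : u, ball (i : X) (ρ i)) := by
          rw [ENNReal.tsum_mul_left, measure_iUnion hdisj' fun _ => measurableSet_ball]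
      _ ≤ ENNReal.ofReal ((2 * τ) ^ n * C) * μ O := by gcongr

theorem hausdorff_le_of_lower_ahlfors_general {X : Type*} [MetricSpace X] [MeasurableSpace X]
    [BorelSpace X] (μ : Measure X) (n : ℝ) (hn : 0 < n) (C : ℝ) (hC : 1 ≤ C)
    (E : Set X)
    (hlow : ∀ x ∈ E, ∃ rx > (0:ℝ), ∀ r ∈ Ioc (0:ℝ) rx,
      ENNReal.ofReal (C⁻¹ * r ^ n) ≤ μ (ball x r)) :
    (∀ O : Set X, IsOpen O → E ⊆ O →
        μH[n] E ≤ ENNReal.ofReal (10 ^ n * C) * μ O) ∧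
      ((μ E = ⨅ (O : Set X) (_ : IsOpen O) (_ : E ⊆ O), μ O) →
        μH[n] E ≤ ENNReal.ofReal (10 ^ n * C) * μ E) := by
  have hK : ENNReal.ofReal (10 ^ n * C) ≠ 0 := (ENNReal.ofReal_pos.2 (by positivity)).ne'
  have hopen : ∀ O : Set X, IsOpen O → E ⊆ O →
      μH[n] E ≤ ENNReal.ofReal (10 ^ n * C) * μ O := by
    intro O hO hEO
    rcases eq_or_ne (μ O) ∞ with hμO | hμO
    · simp [hμO, ENNReal.mul_top hK]
    refine Measure.hausdorffMeasure_le_of_forall_countable_cover n E _ fun ε hε => ?_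
    rw [show (10 : ℝ) = 2 * 5 by norm_num]
    exact exists_countable_cover_tsum_ediam_rpow_le μ hn.le (by linarith) hlow hO hEO hμO
      (by norm_num) hε
  refine ⟨hopen, fun hreg => ?_⟩
  simp only [hreg, ENNReal.mul_iInf_of_ne hK ENNReal.ofReal_ne_top]
  exact le_iInf fun O => le_iInf₂ (hopen O)

/-- If `μ(B(x,r)) ≥ C⁻¹ rⁿ` for all small `r` at every point of `E`, then the `n`-dimensional
Hausdorff measure of `E` is controlled by `μ` on open neighbourhoods of `E`, and by `μ(E)`
itself whenever `μ` is outer regular on `E`. -/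
theorem hausdorff_le_of_lower_ahlfors {X : Type*} [MetricSpace X] [MeasurableSpace X]
    [BorelSpace X] (μ : Measure X) (n : ℝ) (hn : 0 < n) (C : ℝ) (hC : 1 ≤ C)
    (E : Set X) (hE : MeasurableSet E)
    (hlow : ∀ x ∈ E, ∃ rx > (0:ℝ), ∀ r ∈ Ioc (0:ℝ) rx,
      ENNReal.ofReal (C⁻¹ * r ^ n) ≤ μ (ball x r)) :
    (∀ O : Set X, IsOpen O → E ⊆ O →
        μH[n] E ≤ ENNReal.ofReal (10 ^ n * C) * μ O) ∧
      ((μ E = ⨅ (O : Set X) (_ : IsOpen O) (_ : E ⊆ O), μ O) →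
        μH[n] E ≤ ENNReal.ofReal (10 ^ n * C) * μ E) :=
  hausdorff_le_of_lower_ahlfors_general μ n hn C hC E hlow
end

section
/- Let (Z,d) be a proper metric space and fix z̄ ∈ Z. For every θ > 0 there exists ρ > 0 with the following property: whenever γ ∈ C([0,1],Z) satisfies γ(0) = z̄ and (1−ρ)·ℓ·|t₂−t₁| ≤ d(γ(t₁),γ(t₂)) ≤ (1+ρ)·ℓ·|t₂−t₁| for all t₁,t₂ ∈ [0,1] and some ℓ ∈ [0,1], then there exists a geodesic ξ : [0,1] → Z with ξ(0) = z̄ and ξ(1) ∈ closed ball B̄(z̄,1) such that sup_{t∈[0,1]} d(γ(t),ξ(t)) < θ. -/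
open Set Metric

open BoundedContinuousFunction Filter

/-- In a proper metric space, curves that are almost geodesics of speed `ℓ ≤ 1` starting at a
fixed point `zbar` are uniformly close to actual geodesics from `zbar` ending in `B̄(zbar,1)`. -/
theorem close_to_geodesic {Z : Type*} [MetricSpace Z] [ProperSpace Z] (zbar : Z)
    (θ : ℝ) (hθ : 0 < θ) :
    ∃ ρ > (0:ℝ), ∀ γ : ℝ → Z, ContinuousOn γ (Icc 0 1) → γ 0 = zbar →
      ∀ ℓ ∈ Icc (0:ℝ) 1,
        (∀ t₁ ∈ Icc (0:ℝ) 1, ∀ t₂ ∈ Icc (0:ℝ) 1,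
          (1 - ρ) * ℓ * |t₂ - t₁| ≤ dist (γ t₁) (γ t₂) ∧
            dist (γ t₁) (γ t₂) ≤ (1 + ρ) * ℓ * |t₂ - t₁|) →
        ∃ ξ : ℝ → Z,
          (∀ s ∈ Icc (0:ℝ) 1, ∀ t ∈ Icc (0:ℝ) 1,
            dist (ξ s) (ξ t) = |t - s| * dist (ξ 0) (ξ 1)) ∧
          ξ 0 = zbar ∧ ξ 1 ∈ closedBall zbar 1 ∧
          ∀ t ∈ Icc (0:ℝ) 1, dist (γ t) (ξ t) < θ := by
  by_contra h
  push_neg at h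
  -- choose a sequence of almost geodesics with ρ = 1/(n+1)
  set ρ : ℕ → ℝ := fun n => 1 / (n + 1) with hρdef
  have hρpos : ∀ n, 0 < ρ n := fun n => by positivity
  have hρle : ∀ n, ρ n ≤ 1 := fun n => by
    rw [hρdef]; rw [div_le_one (by positivity)]; linarith [Nat.cast_nonneg (α := ℝ) n]
  have hρ0 : Tendsto ρ atTop (nhds 0) := tendsto_one_div_add_atTop_nhds_zero_nat
  choose γ hγc hγ0 ℓ hℓ hbnd hbad using fun n => h (ρ n) (hρpos n)
  -- bundle restrictions to Icc 0 1 as bounded continuous functions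
  have icc01 : ∀ x : Icc (0:ℝ) 1, (x : ℝ) ∈ Icc (0:ℝ) 1 := fun x => x.2
  let F : ℕ → (Icc (0:ℝ) 1 →ᵇ Z) := fun n =>
    BoundedContinuousFunction.mkOfCompact ⟨(Icc (0:ℝ) 1).restrict (γ n), (hγc n).restrict⟩
  have hFval : ∀ n x, F n x = γ n x := fun n x => rfl
  have hlip : ∀ n (x y : Icc (0:ℝ) 1), dist (F n x) (F n y) ≤ 2 * dist x y := by
    intro n x y
    have hb := (hbnd n x (icc01 x) y (icc01 y)).2
    have : dist x y = |(y:ℝ) - (x:ℝ)| := by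
      rw [Subtype.dist_eq, Real.dist_eq, abs_sub_comm]
    rw [hFval, hFval, this]
    calc dist (γ n x) (γ n y) ≤ (1 + ρ n) * ℓ n * |(y:ℝ) - (x:ℝ)| := hb
      _ ≤ 2 * |(y:ℝ) - (x:ℝ)| := by
          apply mul_le_mul_of_nonneg_right _ (abs_nonneg _)
          have h1 := (hℓ n).1; have h2 := (hℓ n).2
          nlinarith [hρle n, (hρpos n).le]
  -- Arzelà–Ascoli
  have hin : ∀ n (x : Icc (0:ℝ) 1), F n x ∈ closedBall zbar 2 := by
    intro n x
    rw [mem_closedBall]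
    have h0 : ((⟨0, by norm_num⟩ : Icc (0:ℝ) 1) : ℝ) = (0:ℝ) := rfl
    have := hlip n x ⟨0, by norm_num⟩
    rw [hFval, hFval] at this
    have hx : dist x (⟨0, by norm_num⟩ : Icc (0:ℝ) 1) ≤ 1 := by
      rw [Subtype.dist_eq, Real.dist_eq]
      have := x.2.1; have := x.2.2
      rw [abs_le]; constructor <;> simp <;> linarith
    calc dist (F n x) zbar = dist (γ n x) (γ n 0) := by rw [hFval, hγ0 n]
      _ ≤ 2 * dist x (⟨0, by norm_num⟩ : Icc (0:ℝ) 1) := this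
      _ ≤ 2 := by linarith
  have hcomp : IsCompact (closure (Set.range F)) := by
    apply BoundedContinuousFunction.arzela_ascoli (closedBall zbar 2)
      (isCompact_closedBall zbar 2)
    · rintro f x ⟨n, rfl⟩; exact hin n x
    · apply Metric.equicontinuous_of_continuity_modulus (fun t => 2 * t)
      · have : Tendsto (fun t : ℝ => 2 * t) (nhds 0) (nhds (2 * 0)) :=
          (continuous_const.mul continuous_id).tendsto 0
        simpa using this
      · rintro x y ⟨f, ⟨n, rfl⟩⟩; exact hlip n x y
  -- extract convergent subsequences
  obtain ⟨ξ', -, φ, hφ, hconv⟩ := hcomp.tendsto_subseq (fun n => subset_closure (mem_range_self n))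
  obtain ⟨l, hlmem, ψ, hψ, hlconv⟩ :=
    (isCompact_Icc (a := (0:ℝ)) (b := 1)).tendsto_subseq (fun n => hℓ (φ n))
  set σ : ℕ → ℕ := φ ∘ ψ with hσdef
  have hσmono : StrictMono σ := hφ.comp hψ
  have hFconv : Tendsto (fun n => F (σ n)) atTop (nhds ξ') :=
    hconv.comp hψ.tendsto_atTop
  have hdist0 : Tendsto (fun n => dist (F (σ n)) ξ') atTop (nhds 0) :=
    tendsto_iff_dist_tendsto_zero.mp hFconv
  have hpt : ∀ x : Icc (0:ℝ) 1, Tendsto (fun n => F (σ n) x) atTop (nhds (ξ' x)) := by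
    intro x
    apply tendsto_iff_dist_tendsto_zero.mpr
    exact squeeze_zero (fun n => dist_nonneg)
      (fun n => BoundedContinuousFunction.dist_coe_le_dist x) hdist0
  have hρσ : Tendsto (fun n => ρ (σ n)) atTop (nhds 0) :=
    hρ0.comp hσmono.tendsto_atTop
  have hlσ : Tendsto (fun n => ℓ (σ n)) atTop (nhds l) := hlconv
  -- limit is a geodesic of speed l
  have hgeo : ∀ x y : Icc (0:ℝ) 1, dist (ξ' x) (ξ' y) = l * |(y:ℝ) - (x:ℝ)| := by
    intro x y
    have h1 : Tendsto (fun n => dist (F (σ n) x) (F (σ n) y)) atTop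
        (nhds (dist (ξ' x) (ξ' y))) := (hpt x).dist (hpt y)
    have h2 : Tendsto (fun n => (1 - ρ (σ n)) * ℓ (σ n) * |(y:ℝ) - (x:ℝ)|) atTop
        (nhds (l * |(y:ℝ) - (x:ℝ)|)) := by
      have := (((tendsto_const_nhds (x := (1:ℝ))).sub hρσ).mul hlσ).mul_const |(y:ℝ) - (x:ℝ)|
      simpa using this
    have h3 : Tendsto (fun n => (1 + ρ (σ n)) * ℓ (σ n) * |(y:ℝ) - (x:ℝ)|) atTop
        (nhds (l * |(y:ℝ) - (x:ℝ)|)) := by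
      have := (((tendsto_const_nhds (x := (1:ℝ))).add hρσ).mul hlσ).mul_const |(y:ℝ) - (x:ℝ)|
      simpa using this
    have hle1 : l * |(y:ℝ) - (x:ℝ)| ≤ dist (ξ' x) (ξ' y) :=
      le_of_tendsto_of_tendsto' h2 h1 (fun n => by
        simpa [hFval] using (hbnd (σ n) x (icc01 x) y (icc01 y)).1)
    have hle2 : dist (ξ' x) (ξ' y) ≤ l * |(y:ℝ) - (x:ℝ)| :=
      le_of_tendsto_of_tendsto' h1 h3 (fun n => by
        simpa [hFval] using (hbnd (σ n) x (icc01 x) y (icc01 y)).2)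
    linarith
  -- define the geodesic on ℝ
  set ξ : ℝ → Z := fun t => ξ' (Set.projIcc 0 1 zero_le_one t) with hξdef
  have hξmem : ∀ t (ht : t ∈ Icc (0:ℝ) 1), ξ t = ξ' ⟨t, ht⟩ := by
    intro t ht
    simp only [hξdef]
    rw [Set.projIcc_of_mem zero_le_one ht]
  have hmem0 : (0:ℝ) ∈ Icc (0:ℝ) 1 := by norm_num
  have hmem1 : (1:ℝ) ∈ Icc (0:ℝ) 1 := by norm_num
  have hξ0 : ξ 0 = zbar := by
    rw [hξmem 0 hmem0]
    refine tendsto_nhds_unique (hpt ⟨0, hmem0⟩) ?_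
    have : ∀ n, F (σ n) (⟨0, hmem0⟩ : Icc (0:ℝ) 1) = zbar := fun n => by
      rw [hFval]; exact hγ0 (σ n)
    exact Tendsto.congr (fun n => (this n).symm) tendsto_const_nhds
  have hd01 : dist (ξ 0) (ξ 1) = l := by
    rw [hξmem 0 hmem0, hξmem 1 hmem1, hgeo]
    norm_num
  have hgeo' : ∀ s ∈ Icc (0:ℝ) 1, ∀ t ∈ Icc (0:ℝ) 1,
      dist (ξ s) (ξ t) = |t - s| * dist (ξ 0) (ξ 1) := by
    intro s hs t ht
    rw [hξmem s hs, hξmem t ht, hd01, hgeo]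
    ring
  have hξ1 : ξ 1 ∈ closedBall zbar 1 := by
    rw [mem_closedBall, dist_comm, ← hξ0, hd01]
    exact hlmem.2
  -- contradiction
  obtain ⟨N, hN⟩ := (Metric.tendsto_atTop.mp hFconv) θ hθ
  obtain ⟨t, ht, htbad⟩ := hbad (σ N) ξ hgeo' hξ0 hξ1
  have : dist (γ (σ N) t) (ξ t) < θ := by
    rw [hξmem t ht]
    calc dist (γ (σ N) t) (ξ' ⟨t, ht⟩) = dist (F (σ N) ⟨t, ht⟩) (ξ' ⟨t, ht⟩) := by rw [hFval]
      _ ≤ dist (F (σ N)) ξ' := BoundedContinuousFunction.dist_coe_le_dist _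
      _ < θ := hN N le_rfl
  linarith
end

section
/- Let (X,d,m) be a metric measure space, x ∈ supp(m), n > 0, C ≥ 1, r₀ > 0 with C⁻¹rⁿ ≤ m(B(x,r)) ≤ C rⁿ for all r ∈ (0,r₀]. Then for every ρ > 0 and ε > 0, for all sufficiently small r > 0 one has m^x_r(B^{d_r}(x, ρ)) ≤ C² 2^{n+1} ρⁿ, where d_r := r⁻¹ d and m^x_r := (∫_{B(x,r)}(1 − d(·,x)/r) dm)⁻¹ m. -/
open Set Metric MeasureTheory

/-- Pointwise Ahlfors regularity of `m` at `x` gives the uniform upper bound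
`m^x_r(B^{d_r}(x,ρ)) ≤ C² 2^{n+1} ρⁿ` for the rescaled measures, for all small `r`. -/
theorem rescaled_measure_upper_bound {X : Type*} [MetricSpace X] [MeasurableSpace X]
    [BorelSpace X] (m : Measure X) (x : X) (n : ℝ) (hn : 0 < n) (C : ℝ) (hC : 1 ≤ C)
    (r₀ : ℝ) (hr₀ : 0 < r₀)
    (hahl : ∀ r ∈ Ioc (0:ℝ) r₀,
      ENNReal.ofReal (C⁻¹ * r ^ n) ≤ m (ball x r) ∧ m (ball x r) ≤ ENNReal.ofReal (C * r ^ n)) :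
    ∀ ρ : ℝ, 0 < ρ → ∀ ε : ℝ, 0 < ε → ∃ r₁ > (0:ℝ), ∀ r ∈ Ioo (0:ℝ) r₁,
      (∫⁻ y in ball x r, ENNReal.ofReal (1 - dist y x / r) ∂m)⁻¹ * m (ball x (r * ρ)) ≤
        ENNReal.ofReal (C ^ 2 * 2 ^ (n + 1) * ρ ^ n) := by
  intro ρ hρ ε hε
  have hC0 : (0:ℝ) < C := lt_of_lt_of_le one_pos hC
  refine ⟨min r₀ (r₀ / ρ), lt_min hr₀ (div_pos hr₀ hρ), ?_⟩
  rintro r ⟨hr0, hr1⟩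
  have hrr₀ : r ≤ r₀ := le_of_lt (lt_of_lt_of_le hr1 (min_le_left _ _))
  have hrρ : r * ρ ≤ r₀ := by
    have h := lt_of_lt_of_le hr1 (min_le_right _ _)
    have : r * ρ ≤ (r₀ / ρ) * ρ := by nlinarith
    calc r * ρ ≤ (r₀ / ρ) * ρ := this
      _ = r₀ := by field_simp
  set a := ∫⁻ y in ball x r, ENNReal.ofReal (1 - dist y x / r) ∂m with ha
  have hhalf : r / 2 ∈ Ioc (0:ℝ) r₀ := ⟨by linarith, by linarith⟩
  have hlowpos : (0:ℝ) < 2⁻¹ * (C⁻¹ * (r / 2) ^ n) := by positivity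
  have hlow : ENNReal.ofReal (2⁻¹ * (C⁻¹ * (r / 2) ^ n)) ≤ a := by
    calc ENNReal.ofReal (2⁻¹ * (C⁻¹ * (r / 2) ^ n))
        = ENNReal.ofReal 2⁻¹ * ENNReal.ofReal (C⁻¹ * (r / 2) ^ n) := by
          rw [ENNReal.ofReal_mul]; norm_num
      _ ≤ ENNReal.ofReal 2⁻¹ * m (ball x (r / 2)) := by
          gcongr; exact (hahl _ hhalf).1
      _ = ∫⁻ _ in ball x (r / 2), ENNReal.ofReal 2⁻¹ ∂m := by
          rw [setLIntegral_const]
      _ ≤ ∫⁻ y in ball x (r / 2), ENNReal.ofReal (1 - dist y x / r) ∂m := by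
          apply setLIntegral_mono' measurableSet_ball
          intro y hy
          apply ENNReal.ofReal_le_ofReal
          have hyd : dist y x < r / 2 := hy
          have : dist y x / r ≤ 1 / 2 := by rw [div_le_iff₀ hr0]; linarith
          linarith
      _ ≤ a := lintegral_mono_set (ball_subset_ball (by linarith))
  have hane : a ≠ 0 :=
    ne_of_gt (lt_of_lt_of_le (ENNReal.ofReal_pos.mpr hlowpos) hlow)
  have hatop : a ≠ ⊤ := by
    have h1 : a ≤ ∫⁻ _ in ball x r, 1 ∂m := by
      apply setLIntegral_mono' measurableSet_ball
      intro y _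
      calc ENNReal.ofReal (1 - dist y x / r) ≤ ENNReal.ofReal 1 := by
            apply ENNReal.ofReal_le_ofReal
            have : 0 ≤ dist y x / r := by positivity
            linarith
        _ = 1 := ENNReal.ofReal_one
    rw [setLIntegral_const, one_mul] at h1
    have h2 : m (ball x r) ≤ ENNReal.ofReal (C * r ^ n) := (hahl _ ⟨hr0, hrr₀⟩).2
    exact ne_top_of_le_ne_top (ENNReal.ofReal_ne_top) (h1.trans h2)
  have key : C ^ 2 * 2 ^ (n + 1) * ρ ^ n * (2⁻¹ * (C⁻¹ * (r / 2) ^ n)) = C * (r * ρ) ^ n := by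
    have h2n : (2:ℝ) ^ (n + 1) = 2 ^ n * 2 := by
      rw [Real.rpow_add (by norm_num), Real.rpow_one]
    have hdiv : ((r:ℝ) / 2) ^ n = r ^ n / 2 ^ n :=
      Real.div_rpow (le_of_lt hr0) (by norm_num) n
    have hmul : ((r:ℝ) * ρ) ^ n = r ^ n * ρ ^ n :=
      Real.mul_rpow (le_of_lt hr0) (le_of_lt hρ)
    have h2pos : (0:ℝ) < (2:ℝ) ^ n := Real.rpow_pos_of_pos (by norm_num) n
    rw [h2n, hdiv, hmul]
    field_simp
  have hb : m (ball x (r * ρ)) ≤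
      ENNReal.ofReal (C ^ 2 * 2 ^ (n + 1) * ρ ^ n) * a := by
    calc m (ball x (r * ρ)) ≤ ENNReal.ofReal (C * (r * ρ) ^ n) :=
          (hahl _ ⟨mul_pos hr0 hρ, hrρ⟩).2
      _ = ENNReal.ofReal (C ^ 2 * 2 ^ (n + 1) * ρ ^ n) *
          ENNReal.ofReal (2⁻¹ * (C⁻¹ * (r / 2) ^ n)) := by
          rw [← ENNReal.ofReal_mul (by positivity), key]
      _ ≤ ENNReal.ofReal (C ^ 2 * 2 ^ (n + 1) * ρ ^ n) * a := by gcongr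
  calc a⁻¹ * m (ball x (r * ρ))
      ≤ a⁻¹ * (ENNReal.ofReal (C ^ 2 * 2 ^ (n + 1) * ρ ^ n) * a) := by gcongr
    _ = ENNReal.ofReal (C ^ 2 * 2 ^ (n + 1) * ρ ^ n) * (a⁻¹ * a) := by ring
    _ = ENNReal.ofReal (C ^ 2 * 2 ^ (n + 1) * ρ ^ n) := by
        rw [ENNReal.inv_mul_cancel hane hatop, mul_one]
end
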